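/- For every real a > 0 there exists a constant C > 0 such that |a_n^{(r)} − 2(n + k)·t_∞^{(r)}| ≤ C·a^n for all n ≥ 1; in particular, a_n^{(r)}/n converges to 2·t_∞^{(r)} as n → ∞, so the limiting density D(k, r) = (r + 1)·lim_{n→∞} a_n^{(r)}/n exists and equals 2(r + 1)·t_∞^{(r)}. -/

import Mathlib

/-!
Since `s m = m (m + 2k + 1) t m`, the recursion reads `a n = 2 (n + k) t (n - k - 1)`, and
`s (n + 1) = s n + a (n + 1)` becomes
`(n + 1) (n + 2k + 2) (t (n + 1) - t n) = 2 (n + k + 1) (t (n - k) - t n)`.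
Thus each increment of `t` is `O(1/n)` times the sum of the `k` previous ones, which forces the
increments, and with them `t n - t_∞`, to decay faster than every geometric sequence. A linear
factor does not spoil this, and `a n - 2 (n + k) t_∞ = 2 (n + k) (t (n - k - 1) - t_∞)`.
-/

open Finset Filter Topology Asymptotics

theorem abs_le_mul_pow_of_le_mul_sum_shift {v : ℕ → ℝ} {k N : ℕ} {p δ : ℝ} (hp0 : 0 < p)
    (hp1 : p ≤ 1) (hδ : 0 ≤ δ) (hδk : δ * k ≤ p ^ k) (hkN : k ≤ N)
    (hv : ∀ n ≥ N, |v n| ≤ δ * ∑ i ∈ range k, |v (n - k + i)|) (n : ℕ) :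
    |v n| ≤ (∑ j ∈ range N, |v j| / p ^ j) * p ^ n := by
  set C := ∑ j ∈ range N, |v j| / p ^ j
  have hC : 0 ≤ C := sum_nonneg fun j _ => by positivity
  induction n using Nat.strong_induction_on with
  | _ n ih =>
  rcases lt_or_ge n N with hn | hn
  · have hle : |v n| / p ^ n ≤ C :=
      single_le_sum (f := fun j => |v j| / p ^ j) (fun j _ => by positivity) (mem_range.2 hn)
    calc |v n| = |v n| / p ^ n * p ^ n := by field_simp
      _ ≤ C * p ^ n := by gcongr
  · have hsum : ∑ i ∈ range k, |v (n - k + i)| ≤ k * (C * p ^ (n - k)) := by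
      calc ∑ i ∈ range k, |v (n - k + i)| ≤ ∑ _i ∈ range k, C * p ^ (n - k) := by
            refine sum_le_sum fun i hi => (ih _ (by have := mem_range.1 hi; omega)).trans ?_
            exact mul_le_mul_of_nonneg_left (pow_le_pow_of_le_one hp0.le hp1 (by omega)) hC
        _ = k * (C * p ^ (n - k)) := by simp
    calc |v n| ≤ δ * ∑ i ∈ range k, |v (n - k + i)| := hv n hn
      _ ≤ δ * (k * (C * p ^ (n - k))) := by gcongr
      _ = δ * k * (C * p ^ (n - k)) := by ring
      _ ≤ p ^ k * (C * p ^ (n - k)) := by gcongr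
      _ = C * p ^ n := by rw [mul_left_comm, ← pow_add, Nat.add_sub_cancel' (by omega)]

def SuperexpDecay (f : ℕ → ℝ) : Prop :=
  ∀ q : ℝ, 0 < q → f =O[atTop] fun n => q ^ n

namespace SuperexpDecay

variable {f g : ℕ → ℝ}

theorem of_lt_one (h : ∀ q : ℝ, 0 < q → q < 1 → f =O[atTop] fun n => q ^ n) :
    SuperexpDecay f := by
  intro q hq
  have hp : 0 < min q (1 / 2) := lt_min hq (by norm_num)
  refine (h _ hp ((min_le_right _ _).trans_lt (by norm_num))).trans (IsBigO.of_bound 1 ?_)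
  filter_upwards with n
  simp only [norm_pow, Real.norm_eq_abs, abs_of_pos hp, abs_of_pos hq, one_mul]
  exact pow_le_pow_left₀ hp.le (min_le_left _ _) n

theorem exists_pos_bound (hf : SuperexpDecay f) {q : ℝ} (hq : 0 < q) :
    ∃ C, 0 < C ∧ ∀ n, |f n| ≤ C * q ^ n := by
  have hfq := hf q hq
  rw [← Nat.cofinite_eq_atTop] at hfq
  obtain ⟨C, hC⟩ := (isBigO_cofinite_iff fun n h => absurd h (pow_ne_zero n hq.ne')).1 hfq
  refine ⟨max C 1, by positivity, fun n => ?_⟩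
  have hn := hC n
  rw [Real.norm_eq_abs, norm_pow, Real.norm_eq_abs, abs_of_pos hq] at hn
  exact hn.trans (by gcongr; exact le_max_left _ _)

theorem congr' (hf : SuperexpDecay f) (h : f =ᶠ[atTop] g) : SuperexpDecay g :=
  fun q hq => (hf q hq).congr' h EventuallyEq.rfl

theorem tendsto_zero (hf : SuperexpDecay f) : Tendsto f atTop (𝓝 0) :=
  (hf 2⁻¹ (by norm_num)).trans_tendsto (tendsto_pow_atTop_nhds_zero_of_lt_one (by norm_num)
    (by norm_num))

theorem comp_sub (hf : SuperexpDecay f) (j : ℕ) : SuperexpDecay fun n => f (n - j) := by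
  intro q hq
  refine ((hf q hq).comp_tendsto (tendsto_sub_atTop_nat j)).trans (IsBigO.of_bound (q ^ j)⁻¹ ?_)
  filter_upwards [eventually_ge_atTop j] with n hn
  rw [Function.comp_apply, pow_sub₀ q hq.ne' hn, mul_comm, norm_mul, norm_inv, norm_pow,
    Real.norm_eq_abs, abs_of_pos hq]

theorem mul_isBigO_pow (hf : SuperexpDecay f) {j : ℕ}
    (hg : g =O[atTop] fun n => (n : ℝ) ^ j) : SuperexpDecay fun n => g n * f n := by
  intro q hq
  refine ((hg.mul (hf (q / 2) (by positivity))).trans_isLittleO ?_).isBigO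
  refine isLittleO_pow_const_mul_const_pow_const_pow_of_norm_lt j ?_
  rw [Real.norm_eq_abs, abs_of_pos (by positivity)]
  linarith

theorem sub_of_tendsto {t : ℕ → ℝ} {L : ℝ} (hd : SuperexpDecay fun n => t (n + 1) - t n)
    (ht : Tendsto t atTop (𝓝 L)) : SuperexpDecay fun n => t n - L := by
  refine of_lt_one fun q hq hq1 => ?_
  obtain ⟨C, -, hC⟩ := hd.exists_pos_bound hq
  have hdist := dist_le_of_le_geometric_of_tendsto q C hq1
    (fun n => by rw [dist_comm, Real.dist_eq]; exact hC n) ht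
  refine IsBigO.of_bound (C / (1 - q)) (Eventually.of_forall fun n => ?_)
  rw [Real.norm_eq_abs, ← Real.dist_eq, norm_pow, Real.norm_eq_abs, abs_of_pos hq]
  exact (hdist n).trans_eq (by ring)

theorem of_isLittleO_sum_shift {v : ℕ → ℝ} {k : ℕ}
    (hv : v =o[atTop] fun n => ∑ i ∈ range k, |v (n - k + i)|) : SuperexpDecay v := by
  refine of_lt_one fun p hp0 hp1 => ?_
  have hδ : 0 < p ^ k / (k + 1) := by positivity
  have hδk : p ^ k / (k + 1) * k ≤ p ^ k := by
    rw [div_mul_eq_mul_div, div_le_iff₀ (by positivity)]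
    nlinarith [pow_pos hp0 k]
  obtain ⟨N, hN⟩ := eventually_atTop.1 ((hv.bound hδ).and (eventually_ge_atTop k))
  have hbound := abs_le_mul_pow_of_le_mul_sum_shift (v := v) hp0 hp1.le hδ.le hδk (hN N le_rfl).2
    fun n hn => by
      have hn' := (hN n hn).1
      rwa [Real.norm_eq_abs, Real.norm_of_nonneg (sum_nonneg fun _ _ => abs_nonneg _)] at hn'
  refine IsBigO.of_bound (∑ j ∈ range N, |v j| / p ^ j) (Eventually.of_forall fun n => ?_)
  rw [Real.norm_eq_abs, Real.norm_of_nonneg (by positivity)]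
  exact hbound n

end SuperexpDecay

section Parking

variable {k : ℕ} {a s t : ℕ → ℝ}

theorem parking_sum_eq (ht : ∀ n : ℕ, t n = s n / ((n : ℝ) * ((n : ℝ) + 2 * k + 1)))
    {m : ℕ} (hm : 0 < m) : s m = m * (m + 2 * k + 1) * t m := by
  rw [ht m]
  field_simp

theorem parking_a_eq
    (ha_rec : ∀ n : ℕ, k + 2 ≤ n →
      a n = 2 / ((n : ℝ) - k - 1) * ∑ i ∈ Finset.Icc 1 (n - k - 1), a i)
    (hs : ∀ n : ℕ, s n = ∑ i ∈ Finset.Icc 1 n, a i)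
    (ht : ∀ n : ℕ, t n = s n / ((n : ℝ) * ((n : ℝ) + 2 * k + 1)))
    {n : ℕ} (hn : k + 2 ≤ n) : a n = 2 * ((n : ℝ) + k) * t (n - k - 1) := by
  have hcast : ((n - k - 1 : ℕ) : ℝ) = n - k - 1 := by
    rw [Nat.sub_sub, Nat.cast_sub (by omega)]
    push_cast
    ring
  have hpos : (0 : ℝ) < n - k - 1 := by
    rw [← hcast]
    exact_mod_cast (by omega : 0 < n - k - 1)
  rw [ha_rec n hn, ← hs, parking_sum_eq ht (by omega), hcast]
  field_simp
  ring

theorem parking_t_recurrence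
    (ha_rec : ∀ n : ℕ, k + 2 ≤ n →
      a n = 2 / ((n : ℝ) - k - 1) * ∑ i ∈ Finset.Icc 1 (n - k - 1), a i)
    (hs : ∀ n : ℕ, s n = ∑ i ∈ Finset.Icc 1 n, a i)
    (ht : ∀ n : ℕ, t n = s n / ((n : ℝ) * ((n : ℝ) + 2 * k + 1)))
    {n : ℕ} (hn : k + 1 ≤ n) :
    ((n : ℝ) + 1) * (n + 2 * k + 2) * (t (n + 1) - t n) =
      2 * ((n : ℝ) + k + 1) * (t (n - k) - t n) := by
  have hsucc : s (n + 1) = s n + a (n + 1) := by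
    rw [hs, hs, sum_Icc_succ_top (by omega)]
  have ha := parking_a_eq ha_rec hs ht (n := n + 1) (by omega)
  rw [show n + 1 - k - 1 = n - k by omega] at ha
  rw [parking_sum_eq ht (by omega), parking_sum_eq ht (by omega), ha] at hsucc
  push_cast at hsucc
  linear_combination hsucc

theorem parking_t_increment_isLittleO
    (ha_rec : ∀ n : ℕ, k + 2 ≤ n →
      a n = 2 / ((n : ℝ) - k - 1) * ∑ i ∈ Finset.Icc 1 (n - k - 1), a i)
    (hs : ∀ n : ℕ, s n = ∑ i ∈ Finset.Icc 1 n, a i)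
    (ht : ∀ n : ℕ, t n = s n / ((n : ℝ) * ((n : ℝ) + 2 * k + 1))) :
    (fun n => t (n + 1) - t n) =o[atTop]
      fun n => ∑ i ∈ range k, |t (n - k + i + 1) - t (n - k + i)| := by
  rw [isLittleO_iff]
  intro c hc
  filter_upwards [eventually_ge_atTop (k + 1),
    (tendsto_const_div_atTop_nhds_zero_nat (2 : ℝ)).eventually_lt_const hc] with n hn hnc
  set S := ∑ i ∈ range k, |t (n - k + i + 1) - t (n - k + i)|
  have hS : |t (n - k) - t n| ≤ S := by
    have htel := sum_range_sub (fun i => t (n - k + i)) k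
    rw [Nat.sub_add_cancel (by omega), Nat.add_zero] at htel
    rw [abs_sub_comm, ← htel]
    exact abs_sum_le_sum_abs _ _
  have hn0 : (0 : ℝ) < n := by exact_mod_cast (by omega : 0 < n)
  have h2c : 2 ≤ c * n := by rw [div_lt_iff₀ hn0] at hnc; linarith
  have hD : (0 : ℝ) < ((n : ℝ) + 1) * (n + 2 * k + 2) := by positivity
  rw [Real.norm_eq_abs, Real.norm_of_nonneg (sum_nonneg fun _ _ => abs_nonneg _)]
  refine le_of_mul_le_mul_left ?_ hD
  calc ((n : ℝ) + 1) * (n + 2 * k + 2) * |t (n + 1) - t n|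
      = 2 * ((n : ℝ) + k + 1) * |t (n - k) - t n| := by
        rw [← abs_of_pos hD, ← abs_mul, parking_t_recurrence ha_rec hs ht hn, abs_mul,
          abs_of_pos (by positivity)]
    _ ≤ (c * n) * ((n : ℝ) + k + 1) * S := by gcongr
    _ = (n * ((n : ℝ) + k + 1)) * (c * S) := by ring
    _ ≤ ((n : ℝ) + 1) * (n + 2 * k + 2) * (c * S) := by
        gcongr <;> linarith

end Parking

theorem parking_density_exists_general
    (k r : ℕ)
    (a s t : ℕ → ℝ)
    (ha_rec : ∀ n : ℕ, k + 2 ≤ n →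
      a n = 2 / ((n : ℝ) - k - 1) * ∑ i ∈ Finset.Icc 1 (n - k - 1), a i)
    (hs : ∀ n : ℕ, s n = ∑ i ∈ Finset.Icc 1 n, a i)
    (ht : ∀ n : ℕ, t n = s n / ((n : ℝ) * ((n : ℝ) + 2 * k + 1)))
    (tinf : ℝ) (htinf : Filter.Tendsto t Filter.atTop (𝓝 tinf)) :
    (∀ c : ℝ, 0 < c → ∃ C : ℝ, 0 < C ∧
      ∀ n : ℕ, 1 ≤ n → |a n - 2 * ((n : ℝ) + k) * tinf| ≤ C * c ^ n) ∧
    Filter.Tendsto (fun n : ℕ => a n / (n : ℝ)) Filter.atTop (𝓝 (2 * tinf)) ∧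
    Filter.Tendsto (fun n : ℕ => ((r : ℝ) + 1) * (a n / (n : ℝ)))
      Filter.atTop (𝓝 (2 * ((r : ℝ) + 1) * tinf)) := by
  have htail : SuperexpDecay fun n => t n - tinf :=
    (SuperexpDecay.of_isLittleO_sum_shift
      (parking_t_increment_isLittleO ha_rec hs ht)).sub_of_tendsto htinf
  have hdev : SuperexpDecay fun n => a n - 2 * ((n : ℝ) + k) * tinf := by
    refine ((htail.comp_sub (k + 1)).mul_isBigO_pow (g := fun n => 2 * ((n : ℝ) + k)) (j := 1)
      ?_).congr' ?_
    · refine IsBigO.of_bound (2 * (k + 1)) ?_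
      filter_upwards [eventually_ge_atTop 1] with n hn
      have hn1 : (1 : ℝ) ≤ n := by exact_mod_cast hn
      rw [Real.norm_of_nonneg (by positivity), pow_one, Real.norm_of_nonneg (by positivity)]
      nlinarith
    · filter_upwards [eventually_ge_atTop (k + 2)] with n hn
      rw [parking_a_eq ha_rec hs ht hn, Nat.sub_sub]
      ring
  have hlim : Tendsto (fun n : ℕ => a n / n) atTop (𝓝 (2 * tinf)) := by
    have h := ((hdev.tendsto_zero.div_atTop tendsto_natCast_atTop_atTop).add
      (tendsto_const_div_atTop_nhds_zero_nat (2 * k * tinf))).add_const (2 * tinf)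
    rw [zero_add, zero_add] at h
    refine h.congr' ?_
    filter_upwards [eventually_ne_atTop 0] with n hn
    field_simp
    ring
  refine ⟨fun c hc => ?_, hlim, ?_⟩
  · obtain ⟨C, hC, hbound⟩ := hdev.exists_pos_bound hc
    exact ⟨C, hC, fun n _ => hbound n⟩
  · convert hlim.const_mul ((r : ℝ) + 1) using 2
    ring

/-- Rényi parking, discrete model: for every `c > 0` there is `C > 0` with
`|a n - 2(n+k)·t_∞| ≤ C·cⁿ` for all `n ≥ 1`; in particular `a n / n → 2·t_∞`,
so the limiting density `D(k,r) = (r+1)·lim a n / n` exists and equals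
`2(r+1)·t_∞`. -/
theorem parking_density_exists
    (k r : ℕ) (hk : 1 ≤ k) (hkr : k ≤ r) (hrk : r ≤ 2 * k)
    (a s t u : ℕ → ℝ)
    (ha_init : ∀ n : ℕ, 1 ≤ n → n ≤ k + 1 →
      a n = if n = r - k + 1 then 1 else 0)
    (ha_rec : ∀ n : ℕ, k + 2 ≤ n →
      a n = 2 / ((n : ℝ) - k - 1) * ∑ i ∈ Finset.Icc 1 (n - k - 1), a i)
    (hs : ∀ n : ℕ, s n = ∑ i ∈ Finset.Icc 1 n, a i)
    (ht : ∀ n : ℕ, t n = s n / ((n : ℝ) * ((n : ℝ) + 2 * k + 1)))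
    (hu : ∀ n : ℕ, 2 ≤ n → u n = t n - t (n - 1))
    (tinf : ℝ) (htinf : Filter.Tendsto t Filter.atTop (𝓝 tinf)) :
    (∀ c : ℝ, 0 < c → ∃ C : ℝ, 0 < C ∧
      ∀ n : ℕ, 1 ≤ n → |a n - 2 * ((n : ℝ) + k) * tinf| ≤ C * c ^ n) ∧
    Filter.Tendsto (fun n : ℕ => a n / (n : ℝ)) Filter.atTop (𝓝 (2 * tinf)) ∧
    Filter.Tendsto (fun n : ℕ => ((r : ℝ) + 1) * (a n / (n : ℝ)))
      Filter.atTop (𝓝 (2 * ((r : ℝ) + 1) * tinf)) :=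
  parking_density_exists_general k r a s t ha_rec hs ht tinf htinf
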